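/- Suppose there exists a Hadamard matrix of order n, with associated matrices C_2,…,C_n from its normalized form, and let L = (l(i,j)) be a symmetric Latin square on {2,…,n}. Define the block matrix M of order n(n−1) by M_{ij} = C_{l(i,j)} if i ≤ j and M_{ij} = −C_{l(i,j)} if i > j. Then M is a (1,−1)-matrix satisfying MM^T = n(n−1)I_{n(n−1)} − nI_{n−1} ⊗ (J_n − I_n), and M − (block-diagonal part of M) is skew-symmetric. -/
import Mathlib


open Matrix Finset

/-- The skew-symmetric regular biangular matrix construction: given the
outer-product matrices `C_i` of a normalized Hadamard matrix of order `n` and a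
symmetric Latin square `ℓ` on the symbols `{2,…,n}` (values avoiding the index of
`C_1`), the block matrix `M` with `(i,j)` block `C_{ℓ(i,j)}` for `i ≤ j` and
`-C_{ℓ(i,j)}` for `i > j` is a `(1,-1)`-matrix of order `n(n-1)` with
`M Mᵀ = n(n-1) I - n (I_{n-1} ⊗ (J_n - I_n))`, and `M` minus its block-diagonal
part is skew-symmetric. -/
theorem skew_biangular_construction (n : ℕ) (hn : 2 ≤ n)
    (C : Fin n → Matrix (Fin n) (Fin n) ℝ)
    (hsymm : ∀ i, (C i)ᵀ = C i)
    (hpm : ∀ i a b, C i a b = 1 ∨ C i a b = -1)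
    (hC1 : C ⟨0, by omega⟩ = (Matrix.of fun _ _ => (1 : ℝ)))
    (horth : ∀ i j, i ≠ j → C i * C j = 0)
    (hsq : ∀ i, C i * C i = (n : ℝ) • C i)
    (hsum : (∑ i, C i) = (n : ℝ) • 1)
    (ℓ : Fin (n - 1) → Fin (n - 1) → Fin n)
    (hℓsymm : ∀ i j, ℓ i j = ℓ j i)
    (hℓlatin : ∀ i, Function.Injective (ℓ i))
    (hℓ0 : ∀ i j, ℓ i j ≠ ⟨0, by omega⟩)
    (M : Matrix (Fin (n - 1) × Fin n) (Fin (n - 1) × Fin n) ℝ)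
    (hM : ∀ (i j : Fin (n - 1)) (a b : Fin n),
      M (i, a) (j, b) = if i ≤ j then C (ℓ i j) a b else -C (ℓ i j) a b) :
    (∀ x y, M x y = 1 ∨ M x y = -1) ∧
    (M * Mᵀ = ((n : ℝ) * ((n : ℝ) - 1)) • 1
      - (n : ℝ) • Matrix.of (fun x y : Fin (n - 1) × Fin n =>
          if x.1 = y.1 ∧ x.2 ≠ y.2 then (1 : ℝ) else 0)) ∧
    (∀ (i j : Fin (n - 1)) (a b : Fin n), i ≠ j → M (i, a) (j, b) = -M (j, b) (i, a)) := by
  have hz : (⟨0, by omega⟩ : Fin n) = ⟨0, by omega⟩ := rfl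
  set z : Fin n := ⟨0, by omega⟩ with hzdef
  have hv : ∀ v (b c : Fin n), C v c b = C v b c :=
    fun v b c => congrFun (congrFun (hsymm v) b) c
  have hcol : ∀ i j k : Fin (n-1), i ≠ j → ℓ i k ≠ ℓ j k := by
    intro i j k hij h
    rw [hℓsymm i k, hℓsymm j k] at h
    exact hij (hℓlatin k h)
  have himg : ∀ i : Fin (n-1), ∑ k, C (ℓ i k) = (n:ℝ) • 1 - C z := by
    intro i
    have hsub : Finset.image (ℓ i) Finset.univ ⊆ Finset.univ.erase z := by
      intro m hm
      simp only [Finset.mem_image] at hm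
      obtain ⟨k, _, rfl⟩ := hm
      exact Finset.mem_erase.2 ⟨hℓ0 i k, Finset.mem_univ _⟩
    have hcard : (Finset.univ.erase z).card ≤ (Finset.image (ℓ i) Finset.univ).card := by
      rw [Finset.card_image_of_injective _ (hℓlatin i), Finset.card_erase_of_mem (Finset.mem_univ _)]
      simp [Fintype.card_fin]
    have heq := Finset.eq_of_subset_of_card_le hsub hcard
    calc ∑ k, C (ℓ i k) = ∑ m ∈ Finset.image (ℓ i) Finset.univ, C m :=
          (Finset.sum_image (fun a _ b _ h => hℓlatin i h)).symm
      _ = ∑ m ∈ Finset.univ.erase z, C m := by rw [heq]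
      _ = (n:ℝ) • 1 - C z := by
          rw [eq_sub_iff_add_eq, ← hsum]
          exact Finset.sum_erase_add _ _ (Finset.mem_univ z)
  have hdot : ∀ u v (a b : Fin n), ∑ c, C u a c * C v b c = (C u * C v) a b := by
    intro u v a b
    rw [Matrix.mul_apply]
    exact Finset.sum_congr rfl fun c _ => by rw [hv v b c]
  refine ⟨?_, ?_, ?_⟩
  · rintro ⟨i, a⟩ ⟨j, b⟩
    rw [hM]
    rcases hpm (ℓ i j) a b with h | h <;> split_ifs <;> simp [h]
  · ext ⟨i, a⟩ ⟨j, b⟩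
    have entry : (M * Mᵀ) (i,a) (j,b) = ∑ k : Fin (n-1),
        (if i ≤ k then (1:ℝ) else -1) * (if j ≤ k then (1:ℝ) else -1) *
        (C (ℓ i k) * C (ℓ j k)) a b := by
      rw [Matrix.mul_apply, Fintype.sum_prod_type]
      refine Finset.sum_congr rfl fun k _ => ?_
      rw [← hdot, Finset.mul_sum]
      refine Finset.sum_congr rfl fun c _ => ?_
      rw [Matrix.transpose_apply, hM, hM]
      split_ifs <;> ring
    rw [entry]
    by_cases hij : i = j
    · subst hij
      have : ∀ k : Fin (n-1),
          (if i ≤ k then (1:ℝ) else -1) * (if i ≤ k then (1:ℝ) else -1) *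
          (C (ℓ i k) * C (ℓ i k)) a b = (n:ℝ) * C (ℓ i k) a b := by
        intro k
        rw [hsq]
        split_ifs <;> simp [Matrix.smul_apply]
      rw [Finset.sum_congr rfl fun k _ => this k, ← Finset.mul_sum]
      have : ∑ k, C (ℓ i k) a b = (∑ k, C (ℓ i k)) a b :=
        (Matrix.sum_apply a b Finset.univ _).symm
      rw [this, himg i]
      simp only [Matrix.sub_apply, Matrix.smul_apply, Matrix.one_apply, Matrix.of_apply,
        Prod.mk.injEq, smul_eq_mul]
      by_cases hab : a = b
      · subst hab
        have : C z a a = 1 := by rw [hC1]; rfl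
        simp [this]
      · have : C z a b = 1 := by rw [hC1]; rfl
        simp [this, hab]
    · have : ∀ k : Fin (n-1),
          (if i ≤ k then (1:ℝ) else -1) * (if j ≤ k then (1:ℝ) else -1) *
          (C (ℓ i k) * C (ℓ j k)) a b = 0 := by
        intro k
        rw [horth _ _ (hcol i j k hij)]
        simp
      rw [Finset.sum_congr rfl fun k _ => this k, Finset.sum_const_zero]
      simp only [Matrix.sub_apply, Matrix.smul_apply, Matrix.one_apply, Matrix.of_apply,
        Prod.mk.injEq, smul_eq_mul]
      simp [hij]
  · intro i j a b hij
    rw [hM, hM, hℓsymm j i, hv (ℓ i j) a b]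
    rcases lt_trichotomy i j with h | h | h
    · rw [if_pos h.le, if_neg (not_le.2 h), neg_neg]
    · exact absurd h hij
    · rw [if_neg (not_le.2 h), if_pos h.le]
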